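/- Modal L²-stability of the truncated PML problem in the high-mode regime (inequality (3.12)/(3.14) of the paper): Assume σ₀ ≥ √3 and let ν ∈ ℝ satisfy ν² ≥ k²R² + λ k R̂². Let f : (0, R̂) → ℂ be measurable with ∫₀^{R̂} r |f(r)|² dr < ∞, and let v be admissible with a_ν(v,v) = ∫₀^{R̂} r f(r) · conj(v(r)) dr. Then ∫₀^{R̂} r |v(r)|² dr ≤ (λk)^{−2} ∫₀^{R̂} r |f(r)|² dr. -/

import Mathlib

open MeasureTheory

noncomputable section

/-- The PML medium property `σ(r)`: `0` for `0 ≤ r ≤ R` and `σ₀` for `r > R`. -/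
def sigPML (σ₀ R r : ℝ) : ℝ := if r ≤ R then 0 else σ₀

/-- `δ(r) = 0` for `0 ≤ r ≤ R` and `δ(r) = σ₀(r−R)/r` for `r > R`. -/
def delPML (σ₀ R r : ℝ) : ℝ := if r ≤ R then 0 else σ₀ * (r - R) / r

/-- `α(r) = 1 + iσ(r)`. -/
def alphaPML (σ₀ R r : ℝ) : ℂ := 1 + Complex.I * sigPML σ₀ R r

/-- `β(r) = 1 + iδ(r)`. -/
def betaPML (σ₀ R r : ℝ) : ℂ := 1 + Complex.I * delPML σ₀ R r

/-- `λ = R^{3/2} / (3 σ₀ R̂² L^{1/2})` with `L = R̂ − R`. -/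
def lamPML (σ₀ R Rh : ℝ) : ℝ := R ^ ((3 : ℝ) / 2) / (3 * σ₀ * Rh ^ 2 * (Rh - R) ^ ((1 : ℝ) / 2))

/-- A function `v : (0, R̂] → ℂ` is admissible if it is locally absolutely continuous with
derivative `v′` and the integrals `∫₀^{R̂} r|v′|²`, `∫₀^{R̂} (1/r)|v|²`, `∫₀^{R̂} r|v|²` are
all finite. -/
def Admissible (Rh : ℝ) (v v' : ℝ → ℂ) : Prop :=
  AEStronglyMeasurable v' (volume.restrict (Set.Ioc 0 Rh)) ∧
  (∀ a b : ℝ, 0 < a → a ≤ b → b ≤ Rh → v b - v a = ∫ t in a..b, v' t) ∧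
  IntegrableOn (fun r => r * ‖v' r‖ ^ 2) (Set.Ioc 0 Rh) ∧
  IntegrableOn (fun r => ‖v r‖ ^ 2 / r) (Set.Ioc 0 Rh) ∧
  IntegrableOn (fun r => r * ‖v r‖ ^ 2) (Set.Ioc 0 Rh)

/-- The modal PML sesquilinear form evaluated at `(v, v)`:
`a_ν(v,v) = ∫₀^{R̂} ((β/α) r |v′|² + ((ν²/r)(α/β) − k²αβr) |v|²) dr`. -/
def aForm (k σ₀ R Rh ν : ℝ) (v v' : ℝ → ℂ) : ℂ :=
  ∫ r in Set.Ioc 0 Rh,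
    ((betaPML σ₀ R r / alphaPML σ₀ R r) * (r : ℂ) * (‖v' r‖ ^ 2 : ℝ) +
      (((ν ^ 2 : ℝ) / r) * (alphaPML σ₀ R r / betaPML σ₀ R r) -
        (k ^ 2 : ℝ) * alphaPML σ₀ R r * betaPML σ₀ R r * r) * (‖v r‖ ^ 2 : ℝ))

/-!
Taking real parts, the PML coefficients make `a_ν` coercive: `Re(β/α) ≥ 0`, and when `σ₀² ≥ 3`
and `ν² ≥ k²R² + cR̂²` one has `Re(ν²α/(rβ) − k²αβr) ≥ c r` pointwise on `(0, R̂]`, whence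
`c ∫ r|v|² ≤ Re a_ν(v,v)`. In the layer `r > R` this reduces, after clearing denominators, to a cubic
inequality in `r − R` whose coefficients are nonnegative once `σ₀² ≥ 3`. Bounding the right-hand
side by Young's inequality, `c ∫ r|v|² ≤ (2c)⁻¹ ∫ r|f|² + (c/2) ∫ r|v|²`, and `c = λk` gives the claim.
-/

open Complex

lemma re_one_add_I_mul_div_one_add_I_mul (s d : ℝ) :
    ((1 + I * s) / (1 + I * d)).re = (1 + s * d) / (1 + d ^ 2) := by
  rw [div_re]
  simp [normSq_apply]
  ring

lemma re_one_add_I_mul_mul_one_add_I_mul (s d : ℝ) :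
    ((1 + I * s) * (1 + I * d)).re = 1 - s * d := by
  simp

lemma one_le_norm_one_add_I_mul (x : ℝ) : 1 ≤ ‖1 + I * x‖ := by
  simpa using re_le_norm (1 + I * x)

lemma norm_one_add_I_mul_le (x : ℝ) : ‖1 + I * x‖ ≤ 1 + |x| := by
  simpa using norm_add_le (1 : ℂ) (I * x)

section Profile

variable {σ₀ R : ℝ}

lemma sigPML_nonneg (hσ₀ : 0 ≤ σ₀) (r : ℝ) : 0 ≤ sigPML σ₀ R r := by
  unfold sigPML; split_ifs <;> simp [hσ₀]

lemma sigPML_le (hσ₀ : 0 ≤ σ₀) (r : ℝ) : sigPML σ₀ R r ≤ σ₀ := by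
  unfold sigPML; split_ifs <;> simp [hσ₀]

lemma delPML_nonneg (hσ₀ : 0 ≤ σ₀) (hR : 0 ≤ R) (r : ℝ) : 0 ≤ delPML σ₀ R r := by
  unfold delPML
  split_ifs with hr
  · rfl
  · have : 0 < r := by linarith
    exact div_nonneg (mul_nonneg hσ₀ (by linarith)) this.le

lemma delPML_le (hσ₀ : 0 ≤ σ₀) (hR : 0 ≤ R) (r : ℝ) : delPML σ₀ R r ≤ σ₀ := by
  unfold delPML
  split_ifs with hr
  · exact hσ₀
  · have : 0 < r := by linarith
    rw [div_le_iff₀ this]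
    nlinarith

lemma measurable_alphaPML : Measurable (alphaPML σ₀ R) :=
  measurable_const.add <| measurable_const.mul <| measurable_ofReal.comp <|
    Measurable.ite measurableSet_Iic measurable_const measurable_const

lemma measurable_betaPML : Measurable (betaPML σ₀ R) :=
  measurable_const.add <| measurable_const.mul <| measurable_ofReal.comp <|
    Measurable.ite measurableSet_Iic measurable_const <| by fun_prop

lemma one_le_norm_alphaPML (r : ℝ) : 1 ≤ ‖alphaPML σ₀ R r‖ := one_le_norm_one_add_I_mul _

lemma one_le_norm_betaPML (r : ℝ) : 1 ≤ ‖betaPML σ₀ R r‖ := one_le_norm_one_add_I_mul _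

lemma norm_alphaPML_le (hσ₀ : 0 ≤ σ₀) (r : ℝ) : ‖alphaPML σ₀ R r‖ ≤ 1 + σ₀ := by
  refine (norm_one_add_I_mul_le _).trans ?_
  rw [abs_of_nonneg (sigPML_nonneg hσ₀ r)]
  linarith [sigPML_le (R := R) hσ₀ r]

lemma norm_betaPML_le (hσ₀ : 0 ≤ σ₀) (hR : 0 ≤ R) (r : ℝ) : ‖betaPML σ₀ R r‖ ≤ 1 + σ₀ := by
  refine (norm_one_add_I_mul_le _).trans ?_
  rw [abs_of_nonneg (delPML_nonneg hσ₀ hR r)]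
  linarith [delPML_le hσ₀ hR r]

lemma lamPML_pos {Rh : ℝ} (hσ₀ : 0 < σ₀) (hR : 0 < R) (hRRh : R < Rh) : 0 < lamPML σ₀ R Rh := by
  have : 0 < (Rh - R) ^ ((1 : ℝ) / 2) := Real.rpow_pos_of_pos (sub_pos.2 hRRh) _
  have : 0 < R ^ ((3 : ℝ) / 2) := Real.rpow_pos_of_pos hR _
  have : 0 < Rh := hR.trans hRRh
  unfold lamPML
  positivity

end Profile

lemma pml_cubic_le {u R y : ℝ} (hu : 3 ≤ u) (hR : 0 ≤ R) (hy : 0 ≤ y) :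
    (R + y - u * y) * ((R + y) ^ 2 + u * y ^ 2) ≤ R ^ 2 * (R + y + u * y) := by
  have hfactor : R ^ 2 * (R + y + u * y) - (R + y - u * y) * ((R + y) ^ 2 + u * y ^ 2) =
      y * ((u ^ 2 - 1) * y ^ 2 + (u - 3) * R * y + 2 * (u - 1) * R ^ 2) := by ring
  have : 0 ≤ (u ^ 2 - 1) * y ^ 2 + (u - 3) * R * y + 2 * (u - 1) * R ^ 2 := by
    have h3 : 0 ≤ u - 3 := by linarith
    have h1 : 0 ≤ u ^ 2 - 1 := by nlinarith
    nlinarith [mul_nonneg h1 (sq_nonneg y), mul_nonneg (mul_nonneg h3 hR) hy, sq_nonneg R]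
  linarith [mul_nonneg hy this]

lemma pml_layer_bound {σ₀ R r : ℝ} (hσ₀ : 3 ≤ σ₀ ^ 2) (hR : 0 ≤ R) (hRr : R < r) :
    (1 - σ₀ * (σ₀ * (r - R) / r)) * ((1 + (σ₀ * (r - R) / r) ^ 2) * r ^ 2) ≤
      R ^ 2 * (1 + σ₀ * (σ₀ * (r - R) / r)) := by
  have hr : 0 < r := by linarith
  set d := σ₀ * (r - R) / r with hd
  have hdr : d * r = σ₀ * (r - R) := by rw [hd]; field_simp
  refine le_of_mul_le_mul_right ?_ hr
  calc (1 - σ₀ * d) * ((1 + d ^ 2) * r ^ 2) * r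
      = (r - σ₀ * (d * r)) * (r ^ 2 + (d * r) ^ 2) := by ring
    _ = (R + (r - R) - σ₀ ^ 2 * (r - R)) * ((R + (r - R)) ^ 2 + σ₀ ^ 2 * (r - R) ^ 2) := by
      rw [hdr]; ring
    _ ≤ R ^ 2 * (R + (r - R) + σ₀ ^ 2 * (r - R)) := pml_cubic_le hσ₀ hR (by linarith)
    _ = R ^ 2 * (1 + σ₀ * d) * r := by
      rw [mul_assoc, add_mul, mul_assoc σ₀, hdr]; ring

lemma mul_le_potential_of_bounds {k ν c R Rh r s d : ℝ} (hr : 0 < r) (hc : 0 ≤ c)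
    (hsd : 0 ≤ s * d) (hkR : (1 - s * d) * ((1 + d ^ 2) * r ^ 2) ≤ R ^ 2 * (1 + s * d))
    (hcRh : (1 + d ^ 2) * r ^ 2 ≤ Rh ^ 2 * (1 + s * d)) (hν : k ^ 2 * R ^ 2 + c * Rh ^ 2 ≤ ν ^ 2) :
    c * r ≤ ν ^ 2 / r * ((1 + s * d) / (1 + d ^ 2)) - k ^ 2 * ((1 - s * d) * r) := by
  have key : c * ((1 + d ^ 2) * r ^ 2) + k ^ 2 * ((1 - s * d) * ((1 + d ^ 2) * r ^ 2)) ≤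
      ν ^ 2 * (1 + s * d) := by
    nlinarith [mul_le_mul_of_nonneg_left hkR (sq_nonneg k), mul_le_mul_of_nonneg_left hcRh hc,
      mul_le_mul_of_nonneg_right hν (by linarith : 0 ≤ 1 + s * d)]
  rw [div_mul_div_comm, le_sub_iff_add_le, le_div_iff₀ (by positivity)]
  linear_combination key

lemma mul_le_pml_potential {k ν c σ₀ R Rh r : ℝ} (hσ₀ : 0 ≤ σ₀) (hσ₀3 : 3 ≤ σ₀ ^ 2)
    (hR : 0 ≤ R) (hr : 0 < r) (hrRh : r ≤ Rh) (hc : 0 ≤ c)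
    (hν : k ^ 2 * R ^ 2 + c * Rh ^ 2 ≤ ν ^ 2) :
    c * r ≤ ν ^ 2 / r * ((1 + sigPML σ₀ R r * delPML σ₀ R r) / (1 + delPML σ₀ R r ^ 2)) -
      k ^ 2 * ((1 - sigPML σ₀ R r * delPML σ₀ R r) * r) := by
  by_cases hrR : r ≤ R
  · simp only [sigPML, delPML, if_pos hrR]
    exact mul_le_potential_of_bounds hr hc (by simp) (by nlinarith) (by nlinarith) hν
  · have hRr : R < r := not_le.1 hrR
    have hd0 := delPML_nonneg hσ₀ hR r
    have hdσ := delPML_le hσ₀ hR r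
    simp only [sigPML, delPML, if_neg hrR] at hd0 hdσ ⊢
    refine mul_le_potential_of_bounds hr hc (mul_nonneg hσ₀ hd0)
      (pml_layer_bound hσ₀3 hR hRr) ?_ hν
    nlinarith [mul_le_mul_of_nonneg_left hdσ hd0, mul_self_le_mul_self hr.le hrRh]

def pmlDensity (k σ₀ R ν r a b : ℝ) : ℂ :=
  (betaPML σ₀ R r / alphaPML σ₀ R r) * (r : ℂ) * (a : ℝ) +
    (((ν ^ 2 : ℝ) / r) * (alphaPML σ₀ R r / betaPML σ₀ R r) -
      (k ^ 2 : ℝ) * alphaPML σ₀ R r * betaPML σ₀ R r * r) * (b : ℝ)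

lemma aForm_eq_integral_pmlDensity (k σ₀ R Rh ν : ℝ) (v v' : ℝ → ℂ) :
    aForm k σ₀ R Rh ν v v' =
      ∫ r in Set.Ioc 0 Rh, pmlDensity k σ₀ R ν r (‖v' r‖ ^ 2) (‖v r‖ ^ 2) :=
  rfl

lemma re_pmlDensity (k σ₀ R ν r a b : ℝ) :
    (pmlDensity k σ₀ R ν r a b).re =
      (1 + delPML σ₀ R r * sigPML σ₀ R r) / (1 + sigPML σ₀ R r ^ 2) * r * a +
        (ν ^ 2 / r * ((1 + sigPML σ₀ R r * delPML σ₀ R r) / (1 + delPML σ₀ R r ^ 2)) -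
          k ^ 2 * ((1 - sigPML σ₀ R r * delPML σ₀ R r) * r)) * b := by
  have hν : ((ν ^ 2 : ℝ) : ℂ) / r = ((ν ^ 2 / r : ℝ) : ℂ) := by push_cast; rfl
  have hk : ((k ^ 2 : ℝ) : ℂ) * alphaPML σ₀ R r * betaPML σ₀ R r * r =
      ((k ^ 2 * r : ℝ) : ℂ) * (alphaPML σ₀ R r * betaPML σ₀ R r) := by push_cast; ring
  rw [pmlDensity, hk, hν]
  simp only [alphaPML, betaPML, add_re, sub_re, re_mul_ofReal, re_ofReal_mul,
    re_one_add_I_mul_div_one_add_I_mul, re_one_add_I_mul_mul_one_add_I_mul]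
  ring

lemma integrable_pmlDensity {k σ₀ R ν : ℝ} (hσ₀ : 0 ≤ σ₀) (hR : 0 ≤ R) {μ : Measure ℝ}
    {a b : ℝ → ℝ} (hra : Integrable (fun r => r * a r) μ) (hbr : Integrable (fun r => b r / r) μ)
    (hrb : Integrable (fun r => r * b r) μ) :
    Integrable (fun r => pmlDensity k σ₀ R ν r (a r) (b r)) μ := by
  have hsplit : (fun r => pmlDensity k σ₀ R ν r (a r) (b r)) = fun r =>
      betaPML σ₀ R r / alphaPML σ₀ R r * ((r * a r : ℝ) : ℂ) +
        ((ν ^ 2 : ℝ) : ℂ) * (alphaPML σ₀ R r / betaPML σ₀ R r) * ((b r / r : ℝ) : ℂ) -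
        ((k ^ 2 : ℝ) : ℂ) * (alphaPML σ₀ R r * betaPML σ₀ R r) * ((r * b r : ℝ) : ℂ) := by
    ext r
    simp only [pmlDensity]
    push_cast
    ring
  have hα := norm_alphaPML_le (R := R) hσ₀
  have hβ := norm_betaPML_le hσ₀ hR
  rw [hsplit]
  refine ((hra.ofReal.bdd_mul (c := 1 + σ₀) ?_ ?_).add
    (hbr.ofReal.bdd_mul (c := ν ^ 2 * (1 + σ₀)) ?_ ?_)).sub
    (hrb.ofReal.bdd_mul (c := k ^ 2 * ((1 + σ₀) * (1 + σ₀))) ?_ ?_)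
  · exact (measurable_betaPML.div measurable_alphaPML).aestronglyMeasurable
  · refine .of_forall fun r => ?_
    rw [norm_div]
    exact (div_le_self (norm_nonneg _) (one_le_norm_alphaPML r)).trans (hβ r)
  · exact (measurable_const.mul (measurable_alphaPML.div measurable_betaPML)).aestronglyMeasurable
  · refine .of_forall fun r => ?_
    rw [norm_mul, norm_div, norm_real, Real.norm_of_nonneg (sq_nonneg ν)]
    gcongr
    exact (div_le_self (norm_nonneg _) (one_le_norm_betaPML r)).trans (hα r)
  · exact (measurable_const.mul (measurable_alphaPML.mul measurable_betaPML)).aestronglyMeasurable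
  · refine .of_forall fun r => ?_
    rw [norm_mul, norm_mul, norm_real, Real.norm_of_nonneg (sq_nonneg k)]
    gcongr
    exacts [hα r, hβ r]

lemma mul_integral_le_re_aForm {k σ₀ R Rh ν c : ℝ} {v v' : ℝ → ℂ} (hσ₀ : 0 ≤ σ₀)
    (hσ₀3 : 3 ≤ σ₀ ^ 2) (hR : 0 ≤ R) (hc : 0 ≤ c) (hν : k ^ 2 * R ^ 2 + c * Rh ^ 2 ≤ ν ^ 2)
    (hv : Admissible Rh v v') :
    c * ∫ r in Set.Ioc 0 Rh, r * ‖v r‖ ^ 2 ≤ (aForm k σ₀ R Rh ν v v').re := by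
  obtain ⟨-, -, hv', hv_div, hv_mul⟩ := hv
  have hint := integrable_pmlDensity (k := k) (ν := ν) hσ₀ hR hv' hv_div hv_mul
  rw [aForm_eq_integral_pmlDensity, ← integral_const_mul, ← RCLike.re_to_complex,
    ← integral_re hint]
  refine integral_mono_ae (hv_mul.const_mul c) hint.re ?_
  filter_upwards [ae_restrict_mem measurableSet_Ioc] with r ⟨hr, hrRh⟩
  have hpot := mul_le_pml_potential hσ₀ hσ₀3 hR hr hrRh hc hν
  have hkin :
      0 ≤ (1 + delPML σ₀ R r * sigPML σ₀ R r) / (1 + sigPML σ₀ R r ^ 2) * r * ‖v' r‖ ^ 2 := by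
    have := mul_nonneg (delPML_nonneg hσ₀ hR r) (sigPML_nonneg (R := R) hσ₀ r)
    positivity
  rw [RCLike.re_to_complex, re_pmlDensity]
  linarith [mul_le_mul_of_nonneg_right hpot (sq_nonneg ‖v r‖)]

lemma re_integral_mul_conj_le {α : Type*} [MeasurableSpace α] {μ : Measure α} {w : α → ℝ}
    {f v : α → ℂ} {c : ℝ} (hc : 0 < c) (hw : ∀ᵐ x ∂μ, 0 ≤ w x)
    (hf : Integrable (fun x => w x * ‖f x‖ ^ 2) μ) (hv : Integrable (fun x => w x * ‖v x‖ ^ 2) μ) :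
    (∫ x, (w x : ℂ) * f x * starRingEnd ℂ (v x) ∂μ).re ≤
      (2 * c)⁻¹ * (∫ x, w x * ‖f x‖ ^ 2 ∂μ) + c / 2 * ∫ x, w x * ‖v x‖ ^ 2 ∂μ := by
  rw [← integral_const_mul, ← integral_const_mul, ← integral_add (hf.const_mul _) (hv.const_mul _)]
  refine (re_le_norm _).trans <| (norm_integral_le_integral_norm _).trans <|
    integral_mono_of_nonneg (.of_forall fun _ => norm_nonneg _)
      ((hf.const_mul _).add (hv.const_mul _)) ?_
  filter_upwards [hw] with x hwx
  have young : ‖f x‖ * ‖v x‖ ≤ (2 * c)⁻¹ * ‖f x‖ ^ 2 + c / 2 * ‖v x‖ ^ 2 := by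
    have hsq : (2 * c)⁻¹ * ‖f x‖ ^ 2 + c / 2 * ‖v x‖ ^ 2 - ‖f x‖ * ‖v x‖ =
        (2 * c)⁻¹ * (‖f x‖ - c * ‖v x‖) ^ 2 := by
      field_simp
      ring
    have : 0 ≤ (2 * c)⁻¹ * (‖f x‖ - c * ‖v x‖) ^ 2 := by positivity
    linarith
  rw [norm_mul, norm_mul, norm_conj, norm_real, Real.norm_of_nonneg hwx]
  linarith [mul_le_mul_of_nonneg_left young hwx]

lemma le_inv_sq_mul_of_mul_le_add {A B c : ℝ} (hc : 0 < c)
    (h : c * A ≤ (2 * c)⁻¹ * B + c / 2 * A) : A ≤ c⁻¹ ^ 2 * B := by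
  rw [inv_pow, inv_mul_eq_div, le_div_iff₀ (by positivity)]
  have := mul_le_mul_of_nonneg_left h (by positivity : 0 ≤ 2 * c)
  field_simp at this
  nlinarith

theorem modal_L2_stability_high_modes_general (k σ₀ R Rh ν : ℝ) (f v v' : ℝ → ℂ)
    (hk : 0 < k) (hσ₀' : Real.sqrt 3 ≤ σ₀) (hR : 0 < R) (hRRh : R < Rh)
    (hν : k ^ 2 * R ^ 2 + lamPML σ₀ R Rh * k * Rh ^ 2 ≤ ν ^ 2)
    (hfint : IntegrableOn (fun r => r * ‖f r‖ ^ 2) (Set.Ioc 0 Rh))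
    (hv : Admissible Rh v v')
    (heq : aForm k σ₀ R Rh ν v v' =
      ∫ r in Set.Ioc 0 Rh, (r : ℂ) * f r * starRingEnd ℂ (v r)) :
    (∫ r in Set.Ioc 0 Rh, r * ‖v r‖ ^ 2) ≤
      (lamPML σ₀ R Rh * k) ⁻¹ ^ 2 * ∫ r in Set.Ioc 0 Rh, r * ‖f r‖ ^ 2 := by
  obtain ⟨hσ₀, hσ₀3⟩ := Real.sqrt_le_iff.1 hσ₀'
  have hc : 0 < lamPML σ₀ R Rh * k :=
    mul_pos (lamPML_pos ((Real.sqrt_pos.2 three_pos).trans_le hσ₀') hR hRRh) hk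
  have hcoercive := mul_integral_le_re_aForm hσ₀ hσ₀3 hR.le hc.le hν hv
  rw [heq] at hcoercive
  exact le_inv_sq_mul_of_mul_le_add hc <| hcoercive.trans <|
    re_integral_mul_conj_le (w := fun r => r) hc
      ((ae_restrict_mem measurableSet_Ioc).mono fun _ hr => hr.1.le) hfint hv.2.2.2.2

/-- Modal L²-stability of the truncated PML problem in the high-mode regime: if `σ₀ ≥ √3`,
`ν² ≥ k²R² + λkR̂²`, `f` is measurable with `∫₀^{R̂} r|f|² < ∞`, and `v` is admissible with
`a_ν(v,v) = ∫₀^{R̂} r f conj(v) dr`, then `∫₀^{R̂} r|v|² ≤ (λk)⁻² ∫₀^{R̂} r|f|²`. -/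
theorem modal_L2_stability_high_modes (k σ₀ R Rh ν : ℝ) (f v v' : ℝ → ℂ)
    (hk : 0 < k) (hσ₀ : 0 < σ₀) (hσ₀' : Real.sqrt 3 ≤ σ₀) (hR : 0 < R) (hRRh : R < Rh)
    (hν : k ^ 2 * R ^ 2 + lamPML σ₀ R Rh * k * Rh ^ 2 ≤ ν ^ 2)
    (hfmeas : AEStronglyMeasurable f (volume.restrict (Set.Ioc 0 Rh)))
    (hfint : IntegrableOn (fun r => r * ‖f r‖ ^ 2) (Set.Ioc 0 Rh))
    (hv : Admissible Rh v v')
    (heq : aForm k σ₀ R Rh ν v v' =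
      ∫ r in Set.Ioc 0 Rh, (r : ℂ) * f r * starRingEnd ℂ (v r)) :
    (∫ r in Set.Ioc 0 Rh, r * ‖v r‖ ^ 2) ≤
      (lamPML σ₀ R Rh * k) ⁻¹ ^ 2 * ∫ r in Set.Ioc 0 Rh, r * ‖f r‖ ^ 2 :=
  modal_L2_stability_high_modes_general k σ₀ R Rh ν f v v' hk hσ₀' hR hRRh hν hfint hv heq

end
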